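/- arXiv:2205.13602 — 2 statements merged into one kernel-verified Lean document; each statement's English description precedes it below -/
import Mathlib

section
/- Suppose x ∼ Pois(λ) for λ ∈ ℝ_{≥0}^m; given x, ȳ^{(i)} ∼ Binomial(x^{(i)}, q^{(i)}) conditionally independently, q ∈ [0,1]^m; given ȳ, the rows of M ∈ ℕ_0^{m×m} are conditionally independent with M^{(i,·)} ∼ Multinomial(ȳ^{(i)}, G^{(i,·)}) for a row-stochastic G; ỹ := (1_m^T M)^T; and y := ỹ + ŷ with ŷ ∼ Pois(κ) independent, κ ∈ ℝ^m_{≥0}. Then the conditional expectation of x given y is E[x | y] = [1_m − q + ({y^T ⊘ [(q ∘ λ)^T G + κ^T]} [(1_m ⊗ q) ∘ G^T])^T] ∘ λ, where for any j with ((q∘λ)^T G)^{(j)} + κ^{(j)} = 0 the corresponding ratio is set to 0. -/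
open scoped BigOperators Classical
open MeasureTheory Filter

noncomputable section

namespace PAL

/-- Poisson probability mass function with rate `lam`. -/
def poisP (lam : ℝ) (k : ℕ) : ℝ := Real.exp (-lam) * lam ^ k / (Nat.factorial k)

/-- Binomial probability mass function with `n` trials and success probability `p`. -/
def binomP (n : ℕ) (p : ℝ) (k : ℕ) : ℝ := (n.choose k : ℝ) * p ^ k * (1 - p) ^ (n - k)

/-- Multinomial probability mass function with `k` trials and probability vector `p`. -/
def multinomP {m : ℕ} (k : ℕ) (p : Fin m → ℝ) (z : Fin m → ℕ) : ℝ :=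
  if (∑ i, z i) = k then (Nat.multinomial Finset.univ z : ℝ) * ∏ i, p i ^ z i else 0

/-- Normalisation `η(v) = v / (1ᵀ v)` of a count vector. -/
def etaN {m : ℕ} (v : Fin m → ℕ) : Fin m → ℝ := fun i => (v i : ℝ) / (∑ j, (v j : ℝ))

/-- Normalisation `η(v) = v / (1ᵀ v)` of a real vector. -/
def etaR {m : ℕ} (v : Fin m → ℝ) : Fin m → ℝ := fun i => v i / (∑ j, v j)

/-- A matrix (given as rows) is row-stochastic. -/
def IsStochastic {m : ℕ} (K : Fin m → Fin m → ℝ) : Prop :=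
  (∀ i j, 0 ≤ K i j) ∧ ∀ i, ∑ j, K i j = 1

/-- `p` is a probability vector. -/
def IsProbVec {m : ℕ} (p : Fin m → ℝ) : Prop := (∀ i, 0 ≤ p i) ∧ ∑ i, p i = 1

end PAL


/-!
Attribute every report to its source: objects of class `i` (detected, then assigned to a cell) or
clutter. Thinning and splitting make the undetected objects `x_i - ȳ_i ∼ Pois((1 - q_i) λ_i)`, the
counts `M i k ∼ Pois(q_i λ_i G_ik)` and the clutter `ŷ_k ∼ Pois(κ_k)` all independent, and
superposition gives `y_k ∼ Pois(μ_k)` with `μ_k = ((q∘λ)ᵀG)_k + κ_k`. Given `y_k`, the sources of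
the reports in cell `k` are multinomial, so `E[M i k | y] = y_k q_i λ_i G_ik / μ_k`, while the
undetected objects are independent of `y`. Hence
`E[x_i | y] = (1 - q_i) λ_i + ∑_k y_k q_i λ_i G_ik / μ_k`.
The sums over all configurations are evaluated in `ℝ≥0∞`, where they may be reordered freely.
-/

open scoped ENNReal

namespace PAL

open Finset

lemma binomP_nonneg {p : ℝ} (h0 : 0 ≤ p) (h1 : p ≤ 1) (n k : ℕ) : 0 ≤ binomP n p k := by
  have : 0 ≤ 1 - p := by linarith
  unfold binomP; positivity

lemma binomP_eq_zero_of_lt {n k : ℕ} (h : n < k) (p : ℝ) : binomP n p k = 0 := by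
  simp [binomP, Nat.choose_eq_zero_of_lt h]

lemma multinomP_nonneg {m : ℕ} {p : Fin m → ℝ} (hp : ∀ i, 0 ≤ p i) (k : ℕ) (z : Fin m → ℕ) :
    0 ≤ multinomP k p z := by
  unfold multinomP
  split_ifs
  · exact mul_nonneg (Nat.cast_nonneg _) (prod_nonneg fun i _ => pow_nonneg (hp i) _)
  · exact le_rfl

section Poisson

variable {ι : Type*} [Fintype ι]

lemma poisP_nonneg {a : ℝ} (ha : 0 ≤ a) (k : ℕ) : 0 ≤ poisP a k := by
  unfold poisP; positivity

lemma succ_mul_poisP_succ (a : ℝ) (k : ℕ) :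
    ((k : ℝ) + 1) * poisP a (k + 1) = a * poisP a k := by
  unfold poisP
  rw [Nat.factorial_succ, pow_succ]
  push_cast
  field_simp

lemma mul_poisP_eq_div_mul_poisP_succ {b A : ℝ} (hb : 0 ≤ b) (hbA : b ≤ A) (Y : ℕ) :
    b * poisP A Y = ((Y : ℝ) + 1) * b / A * poisP A (Y + 1) := by
  rcases (hb.trans hbA).eq_or_lt with hA | hA
  · obtain rfl : b = 0 := le_antisymm (hA ▸ hbA) hb
    simp
  · rw [mul_comm _ b, mul_div_assoc, mul_assoc, div_mul_eq_mul_div, succ_mul_poisP_succ,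
      mul_div_cancel_left₀ _ hA.ne']

lemma prod_poisP (b : ι → ℝ) (z : ι → ℕ) :
    ∏ i, poisP (b i) (z i) =
      Real.exp (-∑ i, b i) * Nat.multinomial univ z * (∏ i, b i ^ z i) / (∑ i, z i).factorial := by
  have hspec : (∏ i, ((z i).factorial : ℝ)) * Nat.multinomial univ z = (∑ i, z i).factorial := by
    exact_mod_cast Nat.multinomial_spec univ z
  have hfac : ∀ i, ((z i).factorial : ℝ) ≠ 0 := fun i => by positivity
  have hmult : (Nat.multinomial univ z : ℝ) ≠ 0 := by exact_mod_cast (Nat.multinomial_pos _ _).ne'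
  unfold poisP
  rw [prod_div_distrib, prod_mul_distrib, ← Real.exp_sum, ← sum_neg_distrib, ← hspec]
  field_simp [prod_ne_zero_iff.mpr fun i _ => hfac i]

/-- Splitting: multinomially distributing a Poisson number of points gives independent
Poisson counts. -/
lemma poisP_mul_multinomP {m : ℕ} {p : Fin m → ℝ} (hp : ∑ i, p i = 1) (a : ℝ) (z : Fin m → ℕ) :
    poisP a (∑ i, z i) * multinomP (∑ i, z i) p z = ∏ i, poisP (a * p i) (z i) := by
  rw [prod_poisP, multinomP, if_pos rfl, ← mul_sum, hp, mul_one]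
  simp_rw [mul_pow, prod_mul_distrib, prod_pow_eq_pow_sum]
  unfold poisP
  ring

/-- Superposition, via the multinomial theorem. -/
lemma sum_piAntidiag_prod_poisP (b : ι → ℝ) (Y : ℕ) :
    ∑ z ∈ univ.piAntidiag Y, ∏ i, poisP (b i) (z i) = poisP (∑ i, b i) Y := by
  have hterm : ∀ z ∈ univ.piAntidiag Y, ∏ i, poisP (b i) (z i) =
      Real.exp (-∑ i, b i) / Y.factorial * (Nat.multinomial univ z * ∏ i, b i ^ z i) := by
    intro z hz
    rw [prod_poisP, (mem_piAntidiag.mp hz).1]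
    ring
  rw [sum_congr rfl hterm, ← mul_sum, ← sum_pow_eq_sum_piAntidiag, poisP]
  ring

/-- Thinning: the kept and the discarded points are independent Poisson. -/
lemma poisP_add_mul_binomP (lam q : ℝ) (k j : ℕ) :
    poisP lam (k + j) * binomP (k + j) q k = poisP (q * lam) k * poisP ((1 - q) * lam) j := by
  have hchoose : ((k + j).choose k : ℝ) * k.factorial * j.factorial = (k + j).factorial := by
    rw [mul_right_comm, add_comm k j]
    exact_mod_cast Nat.add_choose_mul_factorial_mul_factorial j k
  have hchoose0 : ((k + j).choose k : ℝ) ≠ 0 := by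
    exact_mod_cast (Nat.choose_pos (Nat.le_add_right k j)).ne'
  have hexp : Real.exp (-lam) = Real.exp (-(q * lam)) * Real.exp (-((1 - q) * lam)) := by
    rw [← Real.exp_add]; ring_nf
  unfold poisP binomP
  rw [Nat.add_sub_cancel_left, hexp, ← hchoose, mul_pow, mul_pow, pow_add]
  field_simp

end Poisson

section NestedSums

lemma tsum_comm₄ {α β γ δ : Type*} (f : α → β → γ → δ → ℝ≥0∞) :
    ∑' (a) (b) (c) (d), f a b c d = ∑' (c) (d) (a) (b), f a b c d :=
  calc ∑' (a) (b) (c) (d), f a b c d = ∑' (a) (c) (b) (d), f a b c d :=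
        tsum_congr fun _ => ENNReal.tsum_comm
    _ = ∑' (c) (a) (b) (d), f a b c d := ENNReal.tsum_comm
    _ = ∑' (c) (a) (d) (b), f a b c d := tsum_congr fun _ => tsum_congr fun _ => ENNReal.tsum_comm
    _ = ∑' (c) (d) (a) (b), f a b c d := tsum_congr fun _ => ENNReal.tsum_comm

lemma tsum_pi_prod {ι β : Type*} [Fintype ι] (g : ι → β → ℝ≥0∞) :
    ∑' f : ι → β, ∏ i, g i (f i) = ∏ i, ∑' b, g i b := by
  revert g
  refine Fintype.induction_empty_option
    (P := fun ι _ => ∀ g : ι → β → ℝ≥0∞, ∑' f : ι → β, ∏ i, g i (f i) = ∏ i, ∑' b, g i b)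
    ?_ ?_ ?_ ι
  · intro α γ _ e ih g
    let := Fintype.ofEquiv γ e.symm
    rw [← (e.arrowCongr (Equiv.refl β)).tsum_eq, ← e.prod_comp, ← ih]
    refine tsum_congr fun f => (e.prod_comp _).symm.trans ?_
    simp
  · intro g
    simp only [univ_eq_empty, prod_empty]
    exact tsum_eq_single isEmptyElim fun f hf => (hf (Subsingleton.elim _ _)).elim
  · intro α _ ih g
    rw [← (Equiv.piOptionEquivProd (β := fun _ => β)).symm.tsum_eq, ENNReal.tsum_prod']
    simp only [Fintype.prod_option, Equiv.piOptionEquivProd_symm_apply]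
    simp_rw [ENNReal.tsum_mul_left, ih, ENNReal.tsum_mul_right]

lemma tsum_tsum_pi_prod {ι β γ : Type*} [Fintype ι] (g : ι → β → γ → ℝ≥0∞) :
    ∑' (f : ι → β) (e : ι → γ), ∏ i, g i (f i) (e i) = ∏ i, ∑' (b) (c), g i b c := by
  simp_rw [tsum_pi_prod (fun i => g i _), tsum_pi_prod fun i b => ∑' c, g i b c]

/-- Nested real `tsum`s of nonnegative terms are computed in `ℝ≥0∞`: a finite total makes every
inner sum summable, so no junk value `0` appears. -/
lemma tsum₄_eq_toReal {α β γ δ : Type*} {f : α → β → γ → δ → ℝ}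
    (hf : ∀ a b c d, 0 ≤ f a b c d) {e : ℝ≥0∞}
    (he : ∑' (a) (b) (c) (d), ENNReal.ofReal (f a b c d) = e) (hfin : e ≠ ∞) :
    ∑' (a) (b) (c) (d), f a b c d = e.toReal := by
  subst he
  have h₁ := ENNReal.ne_top_of_tsum_ne_top hfin
  have h₂ := fun a => ENNReal.ne_top_of_tsum_ne_top (h₁ a)
  have h₃ := fun a b => ENNReal.ne_top_of_tsum_ne_top (h₂ a b)
  rw [ENNReal.tsum_toReal_eq h₁]
  refine tsum_congr fun a => ?_
  rw [ENNReal.tsum_toReal_eq (h₂ a)]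
  refine tsum_congr fun b => ?_
  rw [ENNReal.tsum_toReal_eq (h₃ a b)]
  refine tsum_congr fun c => ?_
  rw [ENNReal.tsum_toReal_eq (ENNReal.ne_top_of_tsum_ne_top (h₃ a b c))]
  exact tsum_congr fun d => (ENNReal.toReal_ofReal (hf a b c d)).symm

end NestedSums

section PoissonENNReal

variable {ι : Type*} [Fintype ι]

def ePois (a : ℝ) (k : ℕ) : ℝ≥0∞ := ENNReal.ofReal (poisP a k)

lemma tsum_ePois {a : ℝ} (ha : 0 ≤ a) : ∑' k, ePois a k = 1 := by
  have h : HasSum (poisP a) 1 := ProbabilityTheory.hasSum_one_poissonMeasure ⟨a, ha⟩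
  simp only [ePois]
  rw [← ENNReal.ofReal_tsum_of_nonneg (poisP_nonneg ha) h.summable, h.tsum_eq, ENNReal.ofReal_one]

lemma succ_mul_ePois_succ {a : ℝ} (ha : 0 ≤ a) (k : ℕ) :
    ((k + 1 : ℕ) : ℝ≥0∞) * ePois a (k + 1) = ENNReal.ofReal a * ePois a k := by
  rw [ePois, ePois, ← ENNReal.ofReal_natCast, ← ENNReal.ofReal_mul (by positivity),
    ← ENNReal.ofReal_mul ha, Nat.cast_succ, succ_mul_poisP_succ]

lemma tsum_natCast_mul_ePois {a : ℝ} (ha : 0 ≤ a) :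
    ∑' k : ℕ, (k : ℝ≥0∞) * ePois a k = ENNReal.ofReal a := by
  rw [tsum_eq_zero_add' ENNReal.summable, Nat.cast_zero, zero_mul, zero_add]
  simp_rw [succ_mul_ePois_succ ha, ENNReal.tsum_mul_left, tsum_ePois ha, mul_one]

/-- Thinning, summed over the original count `x` with `n` of its points kept. -/
lemma tsum_mul_ofReal_poisP_mul_binomP {lam q : ℝ} (hlam : 0 ≤ lam) (hq : 0 ≤ q)
    (ψ : ℕ → ℝ≥0∞) (n : ℕ) :
    ∑' x, ψ x * ENNReal.ofReal (poisP lam x * binomP x q n) =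
      ePois (q * lam) n * ∑' j, ψ (n + j) * ePois ((1 - q) * lam) j := by
  rw [← ENNReal.summable.sum_add_tsum_nat_add' (k := n),
    sum_eq_zero fun x hx => by rw [binomP_eq_zero_of_lt (mem_range.mp hx), mul_zero,
      ENNReal.ofReal_zero, mul_zero], zero_add, ← ENNReal.tsum_mul_left]
  refine tsum_congr fun j => ?_
  rw [add_comm j n, poisP_add_mul_binomP, ENNReal.ofReal_mul (poisP_nonneg (mul_nonneg hq hlam) n)]
  simp only [ePois]
  ring

lemma prod_tsum_ite_natCast_mul_ePois {c : ι → ℝ} (hc : ∀ i, 0 ≤ c i) (n : ι → ℕ) (i₀ : ι) :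
    ∏ i, ∑' j, (if i = i₀ then ((n i + j : ℕ) : ℝ≥0∞) else 1) * ePois (c i) j =
      n i₀ + ENNReal.ofReal (c i₀) := by
  refine (prod_congr rfl fun i _ => ?_).trans ((prod_ite_eq' univ i₀
    fun i => (n i : ℝ≥0∞) + ENNReal.ofReal (c i)).trans (if_pos (mem_univ i₀)))
  split_ifs
  · push_cast
    simp_rw [add_mul, ENNReal.tsum_add, ENNReal.tsum_mul_left, tsum_ePois (hc i),
      tsum_natCast_mul_ePois (hc i), mul_one]
  · simp_rw [one_mul, tsum_ePois (hc i)]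

variable {a : ι → ℝ}

lemma tsum_ite_sum_eq_prod_ePois (ha : ∀ i, 0 ≤ a i) (Y : ℕ) :
    ∑' z : ι → ℕ, (if ∑ i, z i = Y then ∏ i, ePois (a i) (z i) else 0) = ePois (∑ i, a i) Y := by
  rw [tsum_eq_sum (s := univ.piAntidiag Y) fun z hz => if_neg (by simpa [mem_piAntidiag] using hz),
    sum_congr rfl fun z hz => if_pos (mem_piAntidiag.mp hz).1]
  simp only [ePois]
  rw [← sum_piAntidiag_prod_poisP, ENNReal.ofReal_sum_of_nonneg fun z _ =>
    prod_nonneg fun i _ => poisP_nonneg (ha i) _]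
  exact sum_congr rfl fun z _ =>
    (ENNReal.ofReal_prod_of_nonneg fun i _ => poisP_nonneg (ha i) _).symm

lemma tsum_natCast_mul_prod_ePois (ha : ∀ i, 0 ≤ a i) (j : ι) (F : (ι → ℕ) → ℝ≥0∞) :
    ∑' z : ι → ℕ, (z j : ℝ≥0∞) * (∏ i, ePois (a i) (z i)) * F z =
      ENNReal.ofReal (a j) *
        ∑' z : ι → ℕ, (∏ i, ePois (a i) (z i)) * F (Function.update z j (z j + 1)) := by
  set s : (ι → ℕ) → (ι → ℕ) := fun z => Function.update z j (z j + 1)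
  have hinj : Function.Injective s := by
    intro z w h
    funext i
    have hi := congrFun h i
    by_cases hij : i = j
    · subst hij; simpa [s] using hi
    · simpa [s, hij] using hi
  have hsupp : Function.support (fun z : ι → ℕ => (z j : ℝ≥0∞) * (∏ i, ePois (a i) (z i)) * F z)
      ⊆ Set.range s := by
    intro z hz
    have hzj : z j ≠ 0 := fun h => hz (by simp [h])
    refine ⟨Function.update z j (z j - 1), funext fun i => ?_⟩
    by_cases hij : i = j
    · subst hij; simp [s]; omega
    · simp [s, hij]
  rw [← hinj.tsum_eq hsupp, ← ENNReal.tsum_mul_left]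
  refine tsum_congr fun z => ?_
  simp only [s, Function.update_self]
  rw [prod_eq_mul_prod_sdiff_singleton_of_mem (mem_univ j) fun i => ePois (a i) (z i)]
  simp_rw [Function.apply_update (fun i => ePois (a i)), prod_update_of_mem (mem_univ j)]
  rw [← mul_assoc, succ_mul_ePois_succ (ha j)]
  ring

/-- Given their total `Y`, independent Poisson counts are multinomial, with mean
`Y a_j / ∑ a`. -/
lemma tsum_ite_sum_eq_natCast_mul_prod_ePois (ha : ∀ i, 0 ≤ a i) (j : ι) (Y : ℕ) :
    ∑' z : ι → ℕ, (if ∑ i, z i = Y then (z j : ℝ≥0∞) * ∏ i, ePois (a i) (z i) else 0) =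
      ENNReal.ofReal (Y * a j / ∑ i, a i) * ePois (∑ i, a i) Y := by
  have hind : ∀ z : ι → ℕ, (if ∑ i, z i = Y then (z j : ℝ≥0∞) * ∏ i, ePois (a i) (z i) else 0) =
      (z j : ℝ≥0∞) * (∏ i, ePois (a i) (z i)) * if ∑ i, z i = Y then 1 else 0 := by
    intro z; split_ifs <;> simp
  have hsum : ∀ z : ι → ℕ, ∑ i, Function.update z j (z j + 1) i = ∑ i, z i + 1 := by
    intro z
    rw [sum_update_of_mem (mem_univ j), sum_eq_add_sum_sdiff_singleton_of_mem (mem_univ j) z]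
    ring
  simp_rw [hind, tsum_natCast_mul_prod_ePois ha j, hsum, mul_ite, mul_one, mul_zero]
  cases Y with
  | zero => simp
  | succ Y =>
    have hA : 0 ≤ ∑ i, a i := sum_nonneg fun i _ => ha i
    simp_rw [Nat.add_right_cancel_iff, tsum_ite_sum_eq_prod_ePois ha, ePois,
      ← ENNReal.ofReal_mul (ha j)]
    rw [← ENNReal.ofReal_mul (div_nonneg (mul_nonneg (Nat.cast_nonneg _) (ha j)) hA),
      Nat.cast_succ,
      mul_poisP_eq_div_mul_poisP_succ (ha j) (single_le_sum (fun i _ => ha i) (mem_univ j))]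

end PoissonENNReal

section Columns

variable {ι κ α : Type*}

/-- The reports in cell `k`, sorted by source: `some i` for objects of class `i` (`M i k`), `none`
for clutter (`yh k`). -/
def augmentedCol (M : ι → κ → α) (yh : κ → α) (k : κ) : Option ι → α :=
  fun o => o.elim (yh k) fun i => M i k

lemma sum_augmentedCol [Fintype ι] [AddCommMonoid α] (M : ι → κ → α) (yh : κ → α) (k : κ) :
    ∑ o, augmentedCol M yh k o = ∑ i, M i k + yh k := by
  rw [Fintype.sum_option, add_comm]; rfl

lemma augmentedCol_nonneg [Zero α] [LE α] {M : ι → κ → α} {yh : κ → α} (hM : ∀ i k, 0 ≤ M i k)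
    (hyh : ∀ k, 0 ≤ yh k) (k : κ) (o : Option ι) : 0 ≤ augmentedCol M yh k o := by
  cases o
  exacts [hyh k, hM _ k]

def augmentedColEquiv (ι κ α : Type*) : (ι → κ → α) × (κ → α) ≃ (κ → Option ι → α) where
  toFun p := augmentedCol p.1 p.2
  invFun z := (fun i k => z k (some i), fun k => z k none)
  left_inv _ := rfl
  right_inv z := funext fun k => funext fun o => by cases o <;> rfl

variable [Fintype ι] [Fintype κ]

lemma tsum_tsum_ite_colSum_eq (y : κ → ℕ) (F : κ → (Option ι → ℕ) → ℝ≥0∞) :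
    ∑' (M : ι → κ → ℕ) (yh : κ → ℕ),
        (if (fun k => ∑ i, M i k + yh k) = y then ∏ k, F k (augmentedCol M yh k) else 0) =
      ∏ k, ∑' v : Option ι → ℕ, if ∑ o, v o = y k then F k v else 0 := by
  rw [← tsum_pi_prod, ← ENNReal.tsum_prod, ← (augmentedColEquiv ι κ ℕ).tsum_eq]
  refine tsum_congr fun p => ?_
  simp only [prod_ite_zero, mem_univ, forall_const, funext_iff, ← sum_augmentedCol]
  rfl

lemma tsum_tsum_ite_mul_prod_ePois (y : κ → ℕ) (φ : κ → (Option ι → ℕ) → ℝ≥0∞)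
    (a : ι → κ → ℝ) (b : κ → ℝ) :
    ∑' (M : ι → κ → ℕ) (yh : κ → ℕ),
        (if (fun k => ∑ i, M i k + yh k) = y then
          (∏ k, φ k (augmentedCol M yh k)) *
            ((∏ i, ∏ k, ePois (a i k) (M i k)) * ∏ k, ePois (b k) (yh k)) else 0) =
      ∏ k, ∑' v : Option ι → ℕ,
        if ∑ o, v o = y k then φ k v * ∏ o, ePois (augmentedCol a b k o) (v o) else 0 := by
  rw [← tsum_tsum_ite_colSum_eq]
  refine tsum_congr fun M => tsum_congr fun yh => ?_
  rw [Finset.prod_comm, ← prod_mul_distrib, ← prod_mul_distrib]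
  simp only [Fintype.prod_option, augmentedCol, Option.elim, mul_comm (ePois (b _) _)]

variable {a : ι → κ → ℝ} {b : κ → ℝ}

lemma tsum_tsum_ite_prod_ePois (ha : ∀ i k, 0 ≤ a i k) (hb : ∀ k, 0 ≤ b k) (y : κ → ℕ) :
    ∑' (M : ι → κ → ℕ) (yh : κ → ℕ),
        (if (fun k => ∑ i, M i k + yh k) = y then
          (∏ i, ∏ k, ePois (a i k) (M i k)) * ∏ k, ePois (b k) (yh k) else 0) =
      ∏ k, ePois (∑ i, a i k + b k) (y k) := by
  have h := tsum_tsum_ite_mul_prod_ePois y (fun _ _ => 1) a b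
  simp only [prod_const_one, one_mul] at h
  rw [h]
  refine prod_congr rfl fun k _ => ?_
  rw [tsum_ite_sum_eq_prod_ePois (augmentedCol_nonneg ha hb k), sum_augmentedCol]

lemma tsum_tsum_ite_natCast_mul_prod_ePois (ha : ∀ i k, 0 ≤ a i k) (hb : ∀ k, 0 ≤ b k)
    (y : κ → ℕ) (i₀ : ι) (k₀ : κ) :
    ∑' (M : ι → κ → ℕ) (yh : κ → ℕ),
        (if (fun k => ∑ i, M i k + yh k) = y then
          (M i₀ k₀ : ℝ≥0∞) * ((∏ i, ∏ k, ePois (a i k) (M i k)) * ∏ k, ePois (b k) (yh k))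
        else 0) =
      ENNReal.ofReal (y k₀ * a i₀ k₀ / (∑ i, a i k₀ + b k₀)) *
        ∏ k, ePois (∑ i, a i k + b k) (y k) := by
  have h := tsum_tsum_ite_mul_prod_ePois y
    (fun k v => if k = k₀ then (v (some i₀) : ℝ≥0∞) else 1) a b
  simp only [prod_ite_eq', mem_univ, if_true] at h
  refine h.trans ?_
  rw [prod_eq_mul_prod_sdiff_singleton_of_mem (mem_univ k₀),
    prod_eq_mul_prod_sdiff_singleton_of_mem (mem_univ k₀) fun k => ePois _ (y k), ← mul_assoc]
  congr 1
  · simp only [if_true]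
    rw [tsum_ite_sum_eq_natCast_mul_prod_ePois (augmentedCol_nonneg ha hb k₀), sum_augmentedCol]
    rfl
  · refine prod_congr rfl fun k hk => ?_
    have hk : k ≠ k₀ := by simpa using hk
    simp only [hk, if_false, one_mul]
    rw [tsum_ite_sum_eq_prod_ePois (augmentedCol_nonneg ha hb k), sum_augmentedCol]

lemma tsum_tsum_ite_sum_add_mul_prod_ePois (ha : ∀ i k, 0 ≤ a i k) (hb : ∀ k, 0 ≤ b k)
    (y : κ → ℕ) (i₀ : ι) (c : ℝ≥0∞) :
    ∑' (M : ι → κ → ℕ) (yh : κ → ℕ),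
        (if (fun k => ∑ i, M i k + yh k) = y then
          (∑ k, (M i₀ k : ℝ≥0∞) + c) *
            ((∏ i, ∏ k, ePois (a i k) (M i k)) * ∏ k, ePois (b k) (yh k)) else 0) =
      (c + ∑ k, ENNReal.ofReal (y k * a i₀ k / (∑ i, a i k + b k))) *
        ∏ k, ePois (∑ i, a i k + b k) (y k) := by
  have hsplit : ∀ (M : ι → κ → ℕ) (yh : κ → ℕ),
      (if (fun k => ∑ i, M i k + yh k) = y then
        (∑ k, (M i₀ k : ℝ≥0∞) + c) *
          ((∏ i, ∏ k, ePois (a i k) (M i k)) * ∏ k, ePois (b k) (yh k)) else 0) =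
      c * (if (fun k => ∑ i, M i k + yh k) = y then
            (∏ i, ∏ k, ePois (a i k) (M i k)) * ∏ k, ePois (b k) (yh k) else 0) +
        ∑ k₀, if (fun k => ∑ i, M i k + yh k) = y then
          (M i₀ k₀ : ℝ≥0∞) * ((∏ i, ∏ k, ePois (a i k) (M i k)) * ∏ k, ePois (b k) (yh k))
        else 0 := by
    intro M yh
    split_ifs <;> simp [add_mul, sum_mul, add_comm]
  simp_rw [hsplit, ENNReal.tsum_add, ENNReal.tsum_mul_left,
    Summable.tsum_finsetSum fun _ _ => ENNReal.summable, tsum_tsum_ite_prod_ePois ha hb,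
    tsum_tsum_ite_natCast_mul_prod_ePois ha hb, add_mul, sum_mul]

end Columns

section Row

variable {m : ℕ} {lam q : ℝ} {p : Fin m → ℝ}

variable (lam q p) in
def rowPMF (x yb : ℕ) (z : Fin m → ℕ) : ℝ :=
  poisP lam x * binomP x q yb * multinomP yb p z

lemma rowPMF_nonneg (hlam : 0 ≤ lam) (hq0 : 0 ≤ q) (hq1 : q ≤ 1)
    (hp : IsProbVec p) (x yb : ℕ) (z : Fin m → ℕ) : 0 ≤ rowPMF lam q p x yb z :=
  mul_nonneg (mul_nonneg (poisP_nonneg hlam x) (binomP_nonneg hq0 hq1 x yb))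
    (multinomP_nonneg hp.1 yb z)

/-- Summing out one row: the undetected objects decouple, and the row of `M` becomes a vector of
independent Poisson counts. -/
lemma tsum_tsum_mul_ofReal_rowPMF (hlam : 0 ≤ lam) (hq0 : 0 ≤ q) (hq1 : q ≤ 1) (hp : IsProbVec p)
    (ψ : ℕ → ℝ≥0∞) (z : Fin m → ℕ) :
    ∑' (x) (yb), ψ x * ENNReal.ofReal (rowPMF lam q p x yb z) =
      (∑' j, ψ (∑ k, z k + j) * ePois ((1 - q) * lam) j) *
        ∏ k, ePois (q * lam * p k) (z k) := by
  set n := ∑ k, z k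
  have hcollapse : ∀ x, ∑' yb, ψ x * ENNReal.ofReal (rowPMF lam q p x yb z)
      = ψ x * ENNReal.ofReal (poisP lam x * binomP x q n) * ENNReal.ofReal (multinomP n p z) := by
    intro x
    rw [tsum_eq_single n fun yb hyb => by rw [rowPMF, multinomP, if_neg (Ne.symm hyb)]; simp,
      rowPMF, ENNReal.ofReal_mul (mul_nonneg (poisP_nonneg hlam x) (binomP_nonneg hq0 hq1 x n)),
      mul_assoc]
  simp_rw [hcollapse, ENNReal.tsum_mul_right, tsum_mul_ofReal_poisP_mul_binomP hlam hq0]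
  rw [mul_comm (ePois _ _), mul_assoc, ePois,
    ← ENNReal.ofReal_mul (poisP_nonneg (mul_nonneg hq0 hlam) n), poisP_mul_multinomP hp.2,
    ENNReal.ofReal_prod_of_nonneg fun k _ =>
      poisP_nonneg (mul_nonneg (mul_nonneg hq0 hlam) (hp.1 k)) _]
  rfl

end Row

section Model

variable {ι : Type*} {m : ℕ} {lam q : ι → ℝ} {κ : Fin m → ℝ} {G : ι → Fin m → ℝ}

lemma q_mul_lam_mul_G_nonneg (hlam : ∀ i, 0 ≤ lam i) (hq0 : ∀ i, 0 ≤ q i)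
    (hG : ∀ i, IsProbVec (G i)) (i : ι) (k : Fin m) : 0 ≤ q i * lam i * G i k :=
  mul_nonneg (mul_nonneg (hq0 i) (hlam i)) ((hG i).1 k)

variable [Fintype ι]

variable (lam q κ G) in
def modelPMF (x yb : ι → ℕ) (M : ι → Fin m → ℕ) (yh : Fin m → ℕ) : ℝ :=
  (∏ i, poisP (lam i) (x i)) * (∏ i, binomP (x i) (q i) (yb i)) *
    (∏ i, multinomP (yb i) (G i) (M i)) * ∏ k, poisP (κ k) (yh k)

variable (lam q κ G) in
def obsRate (k : Fin m) : ℝ := ∑ i, q i * lam i * G i k + κ k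

variable (lam q κ G) in
def condMean (y : Fin m → ℕ) (i : ι) : ℝ :=
  (1 - q i) * lam i + ∑ k, y k * (q i * lam i * G i k) / obsRate lam q κ G k

lemma modelPMF_eq (x yb : ι → ℕ) (M : ι → Fin m → ℕ) (yh : Fin m → ℕ) :
    modelPMF lam q κ G x yb M yh =
      (∏ i, rowPMF (lam i) (q i) (G i) (x i) (yb i) (M i)) * ∏ k, poisP (κ k) (yh k) := by
  simp only [modelPMF, rowPMF, prod_mul_distrib]

lemma modelPMF_nonneg (hlam : ∀ i, 0 ≤ lam i) (hq0 : ∀ i, 0 ≤ q i) (hq1 : ∀ i, q i ≤ 1)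
    (hG : ∀ i, IsProbVec (G i)) (hκ : ∀ k, 0 ≤ κ k) (x yb : ι → ℕ) (M : ι → Fin m → ℕ)
    (yh : Fin m → ℕ) : 0 ≤ modelPMF lam q κ G x yb M yh := by
  rw [modelPMF_eq]
  exact mul_nonneg (prod_nonneg fun i _ => rowPMF_nonneg (hlam i) (hq0 i) (hq1 i) (hG i) _ _ _)
    (prod_nonneg fun k _ => poisP_nonneg (hκ k) _)

lemma obsRate_nonneg (hlam : ∀ i, 0 ≤ lam i) (hq0 : ∀ i, 0 ≤ q i) (hG : ∀ i, IsProbVec (G i))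
    (hκ : ∀ k, 0 ≤ κ k) (k : Fin m) : 0 ≤ obsRate lam q κ G k :=
  add_nonneg (sum_nonneg fun i _ => q_mul_lam_mul_G_nonneg hlam hq0 hG i k) (hκ k)

lemma natCast_mul_div_obsRate_nonneg (hlam : ∀ i, 0 ≤ lam i) (hq0 : ∀ i, 0 ≤ q i)
    (hG : ∀ i, IsProbVec (G i)) (hκ : ∀ k, 0 ≤ κ k) (n : ℕ) (i : ι) (k : Fin m) :
    0 ≤ n * (q i * lam i * G i k) / obsRate lam q κ G k :=
  div_nonneg (mul_nonneg (Nat.cast_nonneg _) (q_mul_lam_mul_G_nonneg hlam hq0 hG i k))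
    (obsRate_nonneg hlam hq0 hG hκ k)

lemma condMean_nonneg (hlam : ∀ i, 0 ≤ lam i) (hq0 : ∀ i, 0 ≤ q i) (hq1 : ∀ i, q i ≤ 1)
    (hG : ∀ i, IsProbVec (G i)) (hκ : ∀ k, 0 ≤ κ k) (y : Fin m → ℕ) (i : ι) :
    0 ≤ condMean lam q κ G y i :=
  add_nonneg (mul_nonneg (sub_nonneg.2 (hq1 i)) (hlam i))
    (sum_nonneg fun k _ => natCast_mul_div_obsRate_nonneg hlam hq0 hG hκ (y k) i k)

lemma tsum_ite_mul_ofReal_modelPMF (hlam : ∀ i, 0 ≤ lam i) (hq0 : ∀ i, 0 ≤ q i)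
    (hq1 : ∀ i, q i ≤ 1) (hG : ∀ i, IsProbVec (G i)) (hκ : ∀ k, 0 ≤ κ k)
    (ψ : ι → ℕ → ℝ≥0∞) (y : Fin m → ℕ) :
    ∑' (x) (yb) (M : ι → Fin m → ℕ) (yh : Fin m → ℕ),
        (if (fun k => ∑ i, M i k + yh k) = y then
          (∏ i, ψ i (x i)) * ENNReal.ofReal (modelPMF lam q κ G x yb M yh) else 0) =
      ∑' (M : ι → Fin m → ℕ) (yh : Fin m → ℕ),
        if (fun k => ∑ i, M i k + yh k) = y then
          (∏ i, ∑' j, ψ i (∑ k, M i k + j) * ePois ((1 - q i) * lam i) j) *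
            ((∏ i, ∏ k, ePois (q i * lam i * G i k) (M i k)) * ∏ k, ePois (κ k) (yh k))
        else 0 := by
  have hofReal : ∀ x yb M yh, ENNReal.ofReal (modelPMF lam q κ G x yb M yh) =
      (∏ i, ENNReal.ofReal (rowPMF (lam i) (q i) (G i) (x i) (yb i) (M i))) *
        ∏ k, ePois (κ k) (yh k) := by
    intro x yb M yh
    have hrow := fun i => rowPMF_nonneg (hlam i) (hq0 i) (hq1 i) (hG i) (x i) (yb i) (M i)
    rw [modelPMF_eq, ENNReal.ofReal_mul (prod_nonneg fun i _ => hrow i),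
      ENNReal.ofReal_prod_of_nonneg fun i _ => hrow i,
      ENNReal.ofReal_prod_of_nonneg fun k _ => poisP_nonneg (hκ k) _]
    rfl
  rw [tsum_comm₄]
  refine tsum_congr fun M => tsum_congr fun yh => ?_
  split_ifs
  · simp_rw [hofReal, ← mul_assoc, ← prod_mul_distrib, ENNReal.tsum_mul_right,
      tsum_tsum_pi_prod fun i x yb =>
        ψ i x * ENNReal.ofReal (rowPMF (lam i) (q i) (G i) x yb (M i)),
      tsum_tsum_mul_ofReal_rowPMF (hlam _) (hq0 _) (hq1 _) (hG _)]
  · simp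

lemma tsum_ite_ofReal_modelPMF (hlam : ∀ i, 0 ≤ lam i) (hq0 : ∀ i, 0 ≤ q i)
    (hq1 : ∀ i, q i ≤ 1) (hG : ∀ i, IsProbVec (G i)) (hκ : ∀ k, 0 ≤ κ k) (y : Fin m → ℕ) :
    ∑' (x) (yb) (M : ι → Fin m → ℕ) (yh : Fin m → ℕ),
        (if (fun k => ∑ i, M i k + yh k) = y then
          ENNReal.ofReal (modelPMF lam q κ G x yb M yh) else 0) =
      ∏ k, ePois (obsRate lam q κ G k) (y k) := by
  have h := tsum_ite_mul_ofReal_modelPMF hlam hq0 hq1 hG hκ (fun _ _ => 1) y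
  simp only [prod_const_one, one_mul,
    tsum_ePois (mul_nonneg (sub_nonneg.2 (hq1 _)) (hlam _))] at h
  rw [h, tsum_tsum_ite_prod_ePois (q_mul_lam_mul_G_nonneg hlam hq0 hG) hκ]
  rfl

lemma tsum_ite_natCast_mul_ofReal_modelPMF (hlam : ∀ i, 0 ≤ lam i) (hq0 : ∀ i, 0 ≤ q i)
    (hq1 : ∀ i, q i ≤ 1) (hG : ∀ i, IsProbVec (G i)) (hκ : ∀ k, 0 ≤ κ k) (y : Fin m → ℕ)
    (i₀ : ι) :
    ∑' (x : ι → ℕ) (yb) (M : ι → Fin m → ℕ) (yh : Fin m → ℕ),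
        (if (fun k => ∑ i, M i k + yh k) = y then
          (x i₀ : ℝ≥0∞) * ENNReal.ofReal (modelPMF lam q κ G x yb M yh) else 0) =
      ENNReal.ofReal (condMean lam q κ G y i₀) * ∏ k, ePois (obsRate lam q κ G k) (y k) := by
  have h := tsum_ite_mul_ofReal_modelPMF hlam hq0 hq1 hG hκ
    (fun i n => if i = i₀ then (n : ℝ≥0∞) else 1) y
  have hrow : ∀ M : ι → Fin m → ℕ,
      ∏ i, ∑' j, (if i = i₀ then ((∑ k, M i k + j : ℕ) : ℝ≥0∞) else 1) * ePois ((1 - q i) * lam i) j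
        = ∑ k, (M i₀ k : ℝ≥0∞) + ENNReal.ofReal ((1 - q i₀) * lam i₀) := fun M => by
    rw [prod_tsum_ite_natCast_mul_ePois (fun i => mul_nonneg (sub_nonneg.2 (hq1 i)) (hlam i)),
      Nat.cast_sum]
  simp only [prod_ite_eq', mem_univ, if_true, hrow] at h
  have hterm := fun k => natCast_mul_div_obsRate_nonneg hlam hq0 hG hκ (y k) i₀ k
  rw [h, tsum_tsum_ite_sum_add_mul_prod_ePois (q_mul_lam_mul_G_nonneg hlam hq0 hG) hκ, condMean,
    ENNReal.ofReal_add (mul_nonneg (sub_nonneg.2 (hq1 i₀)) (hlam i₀))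
      (sum_nonneg fun k _ => hterm k), ENNReal.ofReal_sum_of_nonneg fun k _ => hterm k]
  rfl

lemma tsum_ite_modelPMF (hlam : ∀ i, 0 ≤ lam i) (hq0 : ∀ i, 0 ≤ q i) (hq1 : ∀ i, q i ≤ 1)
    (hG : ∀ i, IsProbVec (G i)) (hκ : ∀ k, 0 ≤ κ k) (y : Fin m → ℕ) :
    ∑' (x) (yb) (M : ι → Fin m → ℕ) (yh : Fin m → ℕ),
        (if (fun k => ∑ i, M i k + yh k) = y then modelPMF lam q κ G x yb M yh else 0) =
      ∏ k, poisP (obsRate lam q κ G k) (y k) := by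
  rw [tsum₄_eq_toReal (fun x yb M yh => ?_) ?_
      (ENNReal.prod_ne_top fun k _ => ENNReal.ofReal_ne_top),
    ENNReal.toReal_prod]
  · exact prod_congr rfl fun k _ =>
      ENNReal.toReal_ofReal (poisP_nonneg (obsRate_nonneg hlam hq0 hG hκ k) _)
  · simp only [apply_ite ENNReal.ofReal, ENNReal.ofReal_zero]
    exact tsum_ite_ofReal_modelPMF hlam hq0 hq1 hG hκ y
  · split_ifs
    exacts [modelPMF_nonneg hlam hq0 hq1 hG hκ x yb M yh, le_rfl]

lemma tsum_ite_natCast_mul_modelPMF (hlam : ∀ i, 0 ≤ lam i) (hq0 : ∀ i, 0 ≤ q i)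
    (hq1 : ∀ i, q i ≤ 1) (hG : ∀ i, IsProbVec (G i)) (hκ : ∀ k, 0 ≤ κ k) (y : Fin m → ℕ)
    (i₀ : ι) :
    ∑' (x : ι → ℕ) (yb) (M : ι → Fin m → ℕ) (yh : Fin m → ℕ),
        (if (fun k => ∑ i, M i k + yh k) = y then
          (x i₀ : ℝ) * modelPMF lam q κ G x yb M yh else 0) =
      condMean lam q κ G y i₀ * ∏ k, poisP (obsRate lam q κ G k) (y k) := by
  rw [tsum₄_eq_toReal (fun x yb M yh => ?_) ?_ (ENNReal.mul_ne_top ENNReal.ofReal_ne_top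
      (ENNReal.prod_ne_top fun k _ => ENNReal.ofReal_ne_top)), ENNReal.toReal_mul,
    ENNReal.toReal_ofReal (condMean_nonneg hlam hq0 hq1 hG hκ y i₀), ENNReal.toReal_prod]
  · exact congrArg _ (prod_congr rfl fun k _ =>
      ENNReal.toReal_ofReal (poisP_nonneg (obsRate_nonneg hlam hq0 hG hκ k) _))
  · simp only [apply_ite ENNReal.ofReal, ENNReal.ofReal_zero,
      ENNReal.ofReal_mul (Nat.cast_nonneg _), ENNReal.ofReal_natCast]
    exact tsum_ite_natCast_mul_ofReal_modelPMF hlam hq0 hq1 hG hκ y i₀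
  · split_ifs
    exacts [mul_nonneg (Nat.cast_nonneg _) (modelPMF_nonneg hlam hq0 hq1 hG hκ x yb M yh), le_rfl]

end Model

end PAL

/-- The conditional expectation is encoded as the ratio of the joint expectation to the marginal
mass of `y`; a ratio with zero denominator is `0`, as Lean's `x / 0 = 0`. -/
theorem statement_3 {m : ℕ} (lam q κ : Fin m → ℝ) (G : Fin m → Fin m → ℝ)
    (hlam : ∀ i, 0 ≤ lam i) (hq0 : ∀ i, 0 ≤ q i) (hq1 : ∀ i, q i ≤ 1)
    (hκ : ∀ i, 0 ≤ κ i) (hG : PAL.IsStochastic G)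
    (joint : (Fin m → ℕ) → (Fin m → ℕ) → (Fin m → Fin m → ℕ) → (Fin m → ℕ) → ℝ)
    (hjoint : ∀ x yb M yh, joint x yb M yh =
      (∏ i, PAL.poisP (lam i) (x i)) * (∏ i, PAL.binomP (x i) (q i) (yb i)) *
        (∏ i, PAL.multinomP (yb i) (G i) (M i)) * ∏ k, PAL.poisP (κ k) (yh k))
    (y : Fin m → ℕ)
    (hpos : 0 < ∑' x : Fin m → ℕ, ∑' yb : Fin m → ℕ, ∑' M : Fin m → Fin m → ℕ,
        ∑' yh : Fin m → ℕ,
          (if (fun k => (∑ i, M i k) + yh k) = y then joint x yb M yh else 0)) :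
    ∀ i : Fin m,
      (∑' x : Fin m → ℕ, ∑' yb : Fin m → ℕ, ∑' M : Fin m → Fin m → ℕ, ∑' yh : Fin m → ℕ,
          (if (fun k => (∑ i, M i k) + yh k) = y then (x i : ℝ) * joint x yb M yh else 0)) /
        (∑' x : Fin m → ℕ, ∑' yb : Fin m → ℕ, ∑' M : Fin m → Fin m → ℕ, ∑' yh : Fin m → ℕ,
          (if (fun k => (∑ i, M i k) + yh k) = y then joint x yb M yh else 0))
      = (1 - q i +
          ∑ k, (y k : ℝ) * (q i * G i k) / ((∑ l, q l * lam l * G l k) + κ k)) * lam i := by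
  intro i
  obtain rfl : joint = PAL.modelPMF lam q κ G :=
    funext fun x => funext fun yb => funext fun M => funext fun yh => hjoint x yb M yh
  have hG' : ∀ i, PAL.IsProbVec (G i) := fun i => ⟨hG.1 i, hG.2 i⟩
  rw [PAL.tsum_ite_modelPMF hlam hq0 hq1 hG' hκ] at hpos ⊢
  rw [PAL.tsum_ite_natCast_mul_modelPMF hlam hq0 hq1 hG' hκ, mul_div_assoc, div_self hpos.ne',
    mul_one, add_mul, Finset.sum_mul]
  unfold PAL.condMean PAL.obsRate
  exact congrArg₂ _ (by ring) (Finset.sum_congr rfl fun k _ => by ring)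
end
end

section
/- Let λ ∈ ℝ_{≥0}^m and let λ_n ∈ ℝ_{≥0}^m satisfy ‖n^{-1} λ_n − λ‖_∞ < c n^{−(1/4+γ)} for all n, for constants c > 0 and γ > 0, and let x_n ∼ Pois(λ_n). Then for every f ∈ ℝ^m there exist constants b > 0 and γ̄ > 0 such that E[|n^{-1} x_n^T f − λ^T f|^4]^{1/4} ≤ b n^{−(1/4+γ̄)} for all n. -/
open scoped BigOperators Classical
open MeasureTheory Filter

noncomputable section

open scoped ENNReal

/-!
Write `(xᵀf)/n - λᵀf = ∑ᵢ fᵢ (xᵢ/n - λᵢ)`. Jensen's inequality for the fourth power bounds the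
fourth moment by `m³ ∑ᵢ fᵢ⁴ E(xᵢ/n - λᵢ)⁴`, and each summand only involves the Poisson marginal of
`xᵢ`. Splitting `xᵢ/n - λᵢ` into the fluctuation `(xᵢ - μ)/n` and the bias `μ/n - λᵢ`
(`μ = λ_n⁽ⁱ⁾`), the Poisson central moment `E(X - μ)⁴ = μ + 3μ²`, read off from the factorial
moments `μʳ`, makes the fluctuation part `O(n⁻²)`, while the hypothesis makes the bias part
`O(n^{-(1+4γ)})`. Hence the fourth moment is `O(n^{-(1+4γ̄)})` with `γ̄ = min γ (1/4)`.
-/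

lemma pow_sum_le_card_mul_sum_pow_of_even {ι α : Type*} [Field α] [LinearOrder α]
    [IsStrictOrderedRing α] (s : Finset ι) (a : ι → α) {n : ℕ} (hn : Even (n + 1)) :
    (∑ i ∈ s, a i) ^ (n + 1) ≤ (s.card : α) ^ n * ∑ i ∈ s, a i ^ (n + 1) := by
  calc (∑ i ∈ s, a i) ^ (n + 1) = |∑ i ∈ s, a i| ^ (n + 1) := (hn.pow_abs _).symm
    _ ≤ (∑ i ∈ s, |a i|) ^ (n + 1) := by gcongr; exact Finset.abs_sum_le_sum_abs _ _
    _ ≤ (s.card : α) ^ n * ∑ i ∈ s, |a i| ^ (n + 1) :=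
      pow_sum_le_card_mul_sum_pow (fun i _ => abs_nonneg (a i)) n
    _ = (s.card : α) ^ n * ∑ i ∈ s, a i ^ (n + 1) := by simp only [hn.pow_abs]

namespace ENNReal

lemma tsum_pi_prod {α : Type*} : ∀ {m : ℕ} (p : Fin m → α → ℝ≥0∞),
    ∑' x : Fin m → α, ∏ j, p j (x j) = ∏ j, ∑' a, p j a
  | 0, p => by simp
  | m + 1, p => by
    rw [← (Fin.consEquiv fun _ => α).tsum_eq, Fin.prod_univ_succ]
    simp only [Fin.consEquiv_apply, Fin.prod_univ_succ, Fin.cons_zero, Fin.cons_succ]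
    rw [ENNReal.tsum_prod', ← tsum_pi_prod fun j => p j.succ, ← ENNReal.tsum_mul_right]
    simp only [ENNReal.tsum_mul_left]

lemma tsum_pi_mul_prod_of_tsum_eq_one {α : Type*} {m : ℕ} (p : Fin m → α → ℝ≥0∞) (i : Fin m)
    (hp : ∀ j ≠ i, ∑' a, p j a = 1) (h : α → ℝ≥0∞) :
    ∑' x : Fin m → α, h (x i) * ∏ j, p j (x j) = ∑' a, h a * p i a := by
  set q := Function.update p i fun a => h a * p i a
  have hq : ∀ x : Fin m → α, h (x i) * ∏ j, p j (x j) = ∏ j, q j (x j) := by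
    intro x
    rw [Fintype.prod_eq_mul_prod_compl i, Fintype.prod_eq_mul_prod_compl i, ← mul_assoc]
    congr 1
    · simp [q]
    · refine Finset.prod_congr rfl fun j hj => ?_
      simp [q, Function.update_of_ne (show j ≠ i by simpa using hj)]
  simp_rw [hq]
  rw [tsum_pi_prod, Fintype.prod_eq_mul_prod_compl i, Finset.prod_eq_one fun j hj => ?_]
  · simp [q]
  · have hji : j ≠ i := by simpa using hj
    simp [q, Function.update_of_ne hji, hp j hji]

end ENNReal

lemma abs_sum_mul_div_sub_sum_mul_pow_four_le {m : ℕ} (x : Fin m → ℝ) (t : ℝ) (a f : Fin m → ℝ) :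
    |(∑ i, x i * f i) / t - ∑ i, a i * f i| ^ 4
      ≤ (m : ℝ) ^ 3 * ∑ i, f i ^ 4 * (x i / t - a i) ^ 4 := by
  have hsplit : (∑ i, x i * f i) / t - ∑ i, a i * f i = ∑ i, (x i / t - a i) * f i := by
    rw [Finset.sum_div, ← Finset.sum_sub_distrib]
    exact Finset.sum_congr rfl fun i _ => by ring
  have h := pow_sum_le_card_mul_sum_pow_of_even Finset.univ
    (fun i => (x i / t - a i) * f i) (n := 3) (by decide)
  rw [Even.pow_abs (by decide), hsplit]
  simpa only [Finset.card_univ, Fintype.card_fin, mul_pow, mul_comm (f _ ^ 4)] using h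

lemma add_three_mul_sq_div_pow_four_le {μ t L : ℝ} (hμ : 0 ≤ μ) (ht : 1 ≤ t) (hL : μ / t ≤ L) :
    (μ + 3 * μ ^ 2) / t ^ 4 ≤ (L + 3 * L ^ 2) / t ^ 2 := by
  have ht0 : 0 < t := one_pos.trans_le ht
  have hμL : μ ≤ t * L := by rwa [div_le_iff₀ ht0, mul_comm] at hL
  have hL0 : 0 ≤ L := (div_nonneg hμ ht0.le).trans hL
  have hlin : μ ≤ t ^ 2 * L := hμL.trans (by nlinarith)
  have hsq : μ ^ 2 ≤ t ^ 2 * L ^ 2 := by nlinarith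
  rw [div_le_div_iff₀ (by positivity) (by positivity)]
  nlinarith

lemma pow_four_le_of_abs_le_mul_rpow_neg {d c t s : ℝ} (ht : 0 ≤ t) (hd : |d| ≤ c * t ^ (-s)) :
    d ^ 4 ≤ c ^ 4 * t ^ (-(4 * s)) := by
  calc d ^ 4 = |d| ^ 4 := (Even.pow_abs (by decide) d).symm
    _ ≤ (c * t ^ (-s)) ^ 4 := by gcongr
    _ = c ^ 4 * t ^ (-(4 * s)) := by
        rw [mul_pow, ← Real.rpow_natCast (t ^ (-s)), ← Real.rpow_mul ht]
        norm_num [mul_comm]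

lemma fourth_moment_bound_le_mul_rpow_neg {μ a c γ γ' t : ℝ} (hμ : 0 ≤ μ) (ht : 1 ≤ t) (hc : 0 ≤ c)
    (hγ'0 : 0 ≤ γ') (hγ'γ : γ' ≤ γ) (hγ'4 : γ' ≤ 1 / 4)
    (hconv : |μ / t - a| < c * t ^ (-(1 / 4 + γ))) :
    8 * ((μ + 3 * μ ^ 2) / t ^ 4 + (μ / t - a) ^ 4)
      ≤ 8 * (|a| + c + 3 * (|a| + c) ^ 2 + c ^ 4) * t ^ (-(1 + 4 * γ')) := by
  have ht0 : 0 < t := one_pos.trans_le ht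
  have hmean : μ / t ≤ |a| + c := by
    have hdecay : t ^ (-(1 / 4 + γ)) ≤ 1 := Real.rpow_le_one_of_one_le_of_nonpos ht (by linarith)
    linarith [le_abs_self (μ / t - a), le_abs_self a, mul_le_mul_of_nonneg_left hdecay hc]
  have hvar : (μ + 3 * μ ^ 2) / t ^ 4 ≤ (|a| + c + 3 * (|a| + c) ^ 2) * t ^ (-(1 + 4 * γ')) := by
    refine (add_three_mul_sq_div_pow_four_le hμ ht hmean).trans ?_
    have hsq : (t ^ 2)⁻¹ = t ^ (-2 : ℝ) := by rw [Real.rpow_neg ht0.le, Real.rpow_two]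
    rw [div_eq_mul_inv, hsq]
    exact mul_le_mul_of_nonneg_left (Real.rpow_le_rpow_of_exponent_le ht (by linarith))
      (by positivity)
  have hbias : (μ / t - a) ^ 4 ≤ c ^ 4 * t ^ (-(1 + 4 * γ')) := by
    refine (pow_four_le_of_abs_le_mul_rpow_neg ht0.le hconv.le).trans ?_
    exact mul_le_mul_of_nonneg_left (Real.rpow_le_rpow_of_exponent_le ht (by linarith))
      (by positivity)
  linarith

namespace PAL

lemma poisP_nonneg_s8 {μ : ℝ} (hμ : 0 ≤ μ) (k : ℕ) : 0 ≤ poisP μ k := by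
  unfold poisP; positivity

lemma hasSum_poisP (μ : ℝ) : HasSum (poisP μ) 1 := by
  have h := (NormedSpace.expSeries_div_hasSum_exp μ).mul_left (Real.exp (-μ))
  rw [← Real.exp_eq_exp_ℝ, ← Real.exp_add, neg_add_cancel, Real.exp_zero] at h
  show HasSum (fun k => poisP μ k) 1
  simpa only [poisP, mul_div_assoc] using h

lemma poisP_add_mul_descFactorial (μ : ℝ) (k r : ℕ) :
    poisP μ (k + r) * (k + r).descFactorial r = μ ^ r * poisP μ k := by
  have hfact : ((k + r).factorial : ℝ) = k.factorial * (k + r).descFactorial r := by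
    rw [← Nat.factorial_mul_descFactorial (Nat.le_add_left r k), Nat.add_sub_cancel]
    push_cast; ring
  have hk : (k.factorial : ℝ) ≠ 0 := by positivity
  have hd : ((k + r).descFactorial r : ℝ) ≠ 0 :=
    Nat.cast_ne_zero.mpr (Nat.descFactorial_eq_zero_iff_lt.not.mpr (by omega))
  unfold poisP
  rw [hfact]
  field_simp
  ring

lemma hasSum_poisP_mul_descFactorial (μ : ℝ) (r : ℕ) :
    HasSum (fun k => poisP μ k * k.descFactorial r) (μ ^ r) := by
  refine (hasSum_nat_add_iff' r).mp ?_
  have hlow : ∑ k ∈ Finset.range r, poisP μ k * k.descFactorial r = 0 :=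
    Finset.sum_eq_zero fun k hk => by
      rw [Nat.descFactorial_eq_zero_iff_lt.mpr (Finset.mem_range.mp hk), Nat.cast_zero, mul_zero]
  simp only [hlow, sub_zero, poisP_add_mul_descFactorial]
  simpa using (hasSum_poisP μ).mul_left (μ ^ r)

lemma hasSum_poisP_mul_sub_pow_four (μ : ℝ) :
    HasSum (fun k => poisP μ k * ((k : ℝ) - μ) ^ 4) (μ + 3 * μ ^ 2) := by
  have hd : ∀ (r k : ℕ), (k.descFactorial r : ℝ) = ∏ j ∈ Finset.range r, ((k : ℝ) - j) :=
    fun r k => by rw [← descPochhammer_eval_eq_descFactorial, descPochhammer_eval_eq_prod_range]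
  have h := ((((hasSum_poisP_mul_descFactorial μ 4).add
      ((hasSum_poisP_mul_descFactorial μ 3).mul_left (6 - 4 * μ))).add
      ((hasSum_poisP_mul_descFactorial μ 2).mul_left (7 - 12 * μ + 6 * μ ^ 2))).add
      ((hasSum_poisP_mul_descFactorial μ 1).mul_left (1 - 4 * μ + 6 * μ ^ 2 - 4 * μ ^ 3))).add
      ((hasSum_poisP μ).mul_left (μ ^ 4))
  -- the coefficients expand `(k - μ)⁴` in the falling factorials `k.descFactorial r`
  convert h using 1
  · funext k
    simp only [hd, Finset.prod_range_succ, Finset.prod_range_zero]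
    push_cast
    ring
  · ring

lemma tsum_ofReal_div_sub_pow_four_mul_poisP_le {μ : ℝ} (hμ : 0 ≤ μ) (t a : ℝ) :
    ∑' k : ℕ, ENNReal.ofReal (((k : ℝ) / t - a) ^ 4) * ENNReal.ofReal (poisP μ k)
      ≤ ENNReal.ofReal (8 * ((μ + 3 * μ ^ 2) / t ^ 4 + (μ / t - a) ^ 4)) := by
  set g : ℕ → ℝ := fun k =>
    8 * (poisP μ k * ((k : ℝ) - μ) ^ 4 / t ^ 4 + (μ / t - a) ^ 4 * poisP μ k)
  have hg : HasSum g (8 * ((μ + 3 * μ ^ 2) / t ^ 4 + (μ / t - a) ^ 4)) := by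
    simpa [g, mul_div_assoc] using
      (((hasSum_poisP_mul_sub_pow_four μ).div_const (t ^ 4)).add
        ((hasSum_poisP μ).mul_left ((μ / t - a) ^ 4))).mul_left 8
  have hle : ∀ k : ℕ, ((k : ℝ) / t - a) ^ 4 * poisP μ k ≤ g k := by
    intro k
    have h : ((k : ℝ) / t - a) ^ 4 ≤ 8 * (((k : ℝ) - μ) ^ 4 / t ^ 4 + (μ / t - a) ^ 4) := by
      have h := pow_sum_le_card_mul_sum_pow_of_even Finset.univ
        ![((k : ℝ) - μ) / t, μ / t - a] (n := 3) (by decide)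
      have hsplit : ((k : ℝ) - μ) / t + (μ / t - a) = (k : ℝ) / t - a := by ring
      norm_num [Fin.sum_univ_two, hsplit, div_pow] at h
      exact h
    calc ((k : ℝ) / t - a) ^ 4 * poisP μ k
        ≤ 8 * (((k : ℝ) - μ) ^ 4 / t ^ 4 + (μ / t - a) ^ 4) * poisP μ k :=
          mul_le_mul_of_nonneg_right h (poisP_nonneg_s8 hμ k)
      _ = g k := by simp only [g]; ring
  have hnonneg : ∀ k : ℕ, 0 ≤ ((k : ℝ) / t - a) ^ 4 * poisP μ k :=
    fun k => mul_nonneg (by positivity) (poisP_nonneg_s8 hμ k)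
  calc ∑' k : ℕ, ENNReal.ofReal (((k : ℝ) / t - a) ^ 4) * ENNReal.ofReal (poisP μ k)
      = ∑' k : ℕ, ENNReal.ofReal (((k : ℝ) / t - a) ^ 4 * poisP μ k) :=
        tsum_congr fun k => (ENNReal.ofReal_mul (by positivity)).symm
    _ ≤ ∑' k : ℕ, ENNReal.ofReal (g k) :=
        ENNReal.tsum_le_tsum fun k => ENNReal.ofReal_le_ofReal (hle k)
    _ = ENNReal.ofReal (8 * ((μ + 3 * μ ^ 2) / t ^ 4 + (μ / t - a) ^ 4)) := by
        rw [← ENNReal.ofReal_tsum_of_nonneg (fun k => (hnonneg k).trans (hle k)) hg.summable,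
          hg.tsum_eq]

lemma tsum_ofReal_abs_linear_sub_pow_four_mul_prod_poisP_le {m : ℕ} {μ : Fin m → ℝ}
    (hμ : ∀ i, 0 ≤ μ i) (t : ℝ) (a f : Fin m → ℝ) :
    ∑' x : Fin m → ℕ, ENNReal.ofReal
        (|(∑ i, (x i : ℝ) * f i) / t - ∑ i, a i * f i| ^ 4 * ∏ i, poisP (μ i) (x i))
      ≤ ENNReal.ofReal ((m : ℝ) ^ 3 *
          ∑ i, f i ^ 4 * (8 * ((μ i + 3 * μ i ^ 2) / t ^ 4 + (μ i / t - a i) ^ 4))) := by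
  set p : Fin m → ℕ → ℝ≥0∞ := fun j k => ENNReal.ofReal (poisP (μ j) k)
  set h : Fin m → ℕ → ℝ≥0∞ := fun i k => ENNReal.ofReal (((k : ℝ) / t - a i) ^ 4)
  have hp : ∀ j, ∑' k, p j k = 1 := fun j => by
    rw [← ENNReal.ofReal_tsum_of_nonneg (poisP_nonneg_s8 (hμ j)) (hasSum_poisP (μ j)).summable,
      (hasSum_poisP (μ j)).tsum_eq, ENNReal.ofReal_one]
  have hpoint : ∀ x : Fin m → ℕ, ENNReal.ofReal
      (|(∑ i, (x i : ℝ) * f i) / t - ∑ i, a i * f i| ^ 4 * ∏ i, poisP (μ i) (x i))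
      ≤ ENNReal.ofReal ((m : ℝ) ^ 3) *
          ∑ i, ENNReal.ofReal (f i ^ 4) * (h i (x i) * ∏ j, p j (x j)) := by
    intro x
    have hP : 0 ≤ ∏ i, poisP (μ i) (x i) := Finset.prod_nonneg fun i _ => poisP_nonneg_s8 (hμ i) _
    calc _ ≤ ENNReal.ofReal ((m : ℝ) ^ 3 *
          ∑ i, f i ^ 4 * (((x i : ℝ) / t - a i) ^ 4 * ∏ j, poisP (μ j) (x j))) := by
          refine ENNReal.ofReal_le_ofReal ((mul_le_mul_of_nonneg_right
            (abs_sum_mul_div_sub_sum_mul_pow_four_le (fun i => (x i : ℝ)) t a f) hP).trans_eq ?_)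
          simp only [mul_assoc, Finset.sum_mul]
      _ = _ := by
          rw [ENNReal.ofReal_mul (by positivity),
            ENNReal.ofReal_sum_of_nonneg fun i _ => by positivity]
          refine congrArg _ (Finset.sum_congr rfl fun i _ => ?_)
          rw [ENNReal.ofReal_mul (by positivity), ENNReal.ofReal_mul (by positivity),
            ENNReal.ofReal_prod_of_nonneg fun j _ => poisP_nonneg_s8 (hμ j) _]
  calc _ ≤ ∑' x : Fin m → ℕ, ENNReal.ofReal ((m : ℝ) ^ 3) *
          ∑ i, ENNReal.ofReal (f i ^ 4) * (h i (x i) * ∏ j, p j (x j)) :=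
        ENNReal.tsum_le_tsum hpoint
    _ = ENNReal.ofReal ((m : ℝ) ^ 3) *
          ∑ i, ENNReal.ofReal (f i ^ 4) * ∑' k, h i k * p i k := by
        rw [ENNReal.tsum_mul_left, Summable.tsum_finsetSum fun i _ => ENNReal.summable]
        simp only [ENNReal.tsum_mul_left,
          ENNReal.tsum_pi_mul_prod_of_tsum_eq_one p _ (fun j _ => hp j)]
    _ ≤ ENNReal.ofReal ((m : ℝ) ^ 3) * ∑ i, ENNReal.ofReal (f i ^ 4) *
          ENNReal.ofReal (8 * ((μ i + 3 * μ i ^ 2) / t ^ 4 + (μ i / t - a i) ^ 4)) := by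
        gcongr with i
        exact tsum_ofReal_div_sub_pow_four_mul_poisP_le (hμ i) t (a i)
    _ = _ := by
        rw [ENNReal.ofReal_mul (by positivity),
          ENNReal.ofReal_sum_of_nonneg fun i _ => by have := hμ i; positivity]
        simp only [ENNReal.ofReal_mul (by positivity : (0 : ℝ) ≤ f _ ^ 4)]

lemma tsum_ofReal_abs_linear_sub_pow_four_mul_prod_poisP_le_mul_rpow_neg {m : ℕ}
    {μ : Fin m → ℝ} (hμ : ∀ i, 0 ≤ μ i) {a : Fin m → ℝ} {c γ γ' t : ℝ} (ht : 1 ≤ t) (hc : 0 ≤ c)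
    (hγ'0 : 0 ≤ γ') (hγ'γ : γ' ≤ γ) (hγ'4 : γ' ≤ 1 / 4)
    (hconv : ∀ i, |μ i / t - a i| < c * t ^ (-(1 / 4 + γ))) (f : Fin m → ℝ) :
    ∑' x : Fin m → ℕ, ENNReal.ofReal
        (|(∑ i, (x i : ℝ) * f i) / t - ∑ i, a i * f i| ^ 4 * ∏ i, poisP (μ i) (x i))
      ≤ ENNReal.ofReal ((m : ℝ) ^ 3
          * (∑ i, f i ^ 4 * (8 * (|a i| + c + 3 * (|a i| + c) ^ 2 + c ^ 4)))
          * t ^ (-(1 + 4 * γ'))) := by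
  refine (tsum_ofReal_abs_linear_sub_pow_four_mul_prod_poisP_le hμ t a f).trans
    (ENNReal.ofReal_le_ofReal ?_)
  rw [mul_assoc, Finset.sum_mul]
  refine mul_le_mul_of_nonneg_left (Finset.sum_le_sum fun i _ => ?_) (by positivity)
  rw [mul_assoc]
  exact mul_le_mul_of_nonneg_left
    (fourth_moment_bound_le_mul_rpow_neg (hμ i) ht hc hγ'0 hγ'γ hγ'4 (hconv i)) (by positivity)

end PAL

theorem statement_8_general {m : ℕ} (lam : Fin m → ℝ) (lamn : ℕ → Fin m → ℝ) (c γ : ℝ)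
    (hc : 0 < c) (hγ : 0 < γ)
    (hlamn : ∀ n i, 0 ≤ lamn n i)
    (hconv : ∀ n : ℕ, 1 ≤ n → ∀ i,
      |lamn n i / (n : ℝ) - lam i| < c * (n : ℝ) ^ (-(1 / 4 + γ) : ℝ)) :
    ∀ f : Fin m → ℝ, ∃ b > (0 : ℝ), ∃ γb > (0 : ℝ), ∀ n : ℕ, 1 ≤ n →
      (∑' x : Fin m → ℕ,
          ENNReal.ofReal
            (|(∑ i, (x i : ℝ) * f i) / (n : ℝ) - ∑ i, lam i * f i| ^ 4 *
              ∏ i, PAL.poisP (lamn n i) (x i))) ^ ((1 : ℝ) / 4)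
        ≤ ENNReal.ofReal (b * (n : ℝ) ^ (-(1 / 4 + γb) : ℝ)) := by
  intro f
  set γ' := min γ (1 / 4)
  set K := (m : ℝ) ^ 3 * ∑ i, f i ^ 4 * (8 * (|lam i| + c + 3 * (|lam i| + c) ^ 2 + c ^ 4))
  have hK : 0 ≤ K := by positivity
  refine ⟨(K + 1) ^ ((1 : ℝ) / 4), by positivity, γ', lt_min hγ (by norm_num), fun n hn => ?_⟩
  have ht : (1 : ℝ) ≤ n := Nat.one_le_cast.mpr hn
  have hmoment := PAL.tsum_ofReal_abs_linear_sub_pow_four_mul_prod_poisP_le_mul_rpow_neg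
    (hlamn n) ht hc.le (le_min hγ.le (by norm_num)) (min_le_left _ _) (min_le_right _ _)
    (hconv n hn) f
  calc _ ≤ ENNReal.ofReal ((K + 1) * (n : ℝ) ^ (-(1 + 4 * γ'))) ^ ((1 : ℝ) / 4) := by
        refine ENNReal.rpow_le_rpow (hmoment.trans (ENNReal.ofReal_le_ofReal ?_)) (by norm_num)
        gcongr
        exact le_add_of_nonneg_right zero_le_one
    _ = ENNReal.ofReal ((K + 1) ^ ((1 : ℝ) / 4) * (n : ℝ) ^ (-(1 / 4 + γ'))) := by
        rw [ENNReal.ofReal_rpow_of_nonneg (by positivity) (by norm_num),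
          Real.mul_rpow (by positivity) (by positivity), ← Real.rpow_mul (by positivity)]
        ring_nf

/-- (Corollary to Lemma 7.)  Let `λ, λ_n ∈ ℝ₊ᵐ` with
`‖n⁻¹λ_n − λ‖_∞ < c n^{−(1/4+γ)}` for all `n ≥ 1`, and let `x_n ∼ Pois(λ_n)` (independent
Poisson components).  Then for every `f ∈ ℝᵐ` there exist `b > 0` and `γ̄ > 0` with
`E[|n⁻¹ x_nᵀ f − λᵀ f|⁴]^{1/4} ≤ b n^{−(1/4+γ̄)}` for all `n ≥ 1`. -/
theorem statement_8 {m : ℕ} (lam : Fin m → ℝ) (lamn : ℕ → Fin m → ℝ) (c γ : ℝ)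
    (hc : 0 < c) (hγ : 0 < γ)
    (hlam : ∀ i, 0 ≤ lam i) (hlamn : ∀ n i, 0 ≤ lamn n i)
    (hconv : ∀ n : ℕ, 1 ≤ n → ∀ i,
      |lamn n i / (n : ℝ) - lam i| < c * (n : ℝ) ^ (-(1 / 4 + γ) : ℝ)) :
    ∀ f : Fin m → ℝ, ∃ b > (0 : ℝ), ∃ γb > (0 : ℝ), ∀ n : ℕ, 1 ≤ n →
      (∑' x : Fin m → ℕ,
          ENNReal.ofReal
            (|(∑ i, (x i : ℝ) * f i) / (n : ℝ) - ∑ i, lam i * f i| ^ 4 *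
              ∏ i, PAL.poisP (lamn n i) (x i))) ^ ((1 : ℝ) / 4)
        ≤ ENNReal.ofReal (b * (n : ℝ) ^ (-(1 / 4 + γb) : ℝ)) :=
  statement_8_general lam lamn c γ hc hγ hlamn hconv
end
end
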